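/- Let S be a bi-ideal-free semiring and n ≥ 1. Then every bi-ideal I of M_n(S) contains all constant matrices ā for a ∈ S; consequently M_n(S) has a least bi-ideal, namely Q_a = M_n(S)·ā·M_n(S) + M_n(S) for any a ∈ S, and this equals the bi-ideal generated by ā. -/

import Mathlib

/-- A semiring in the sense of the paper: associative `+` and `*`, `+` commutative,
`*` distributing over `+` from both sides; no zero or unity assumed. -/
class PSemiring (S : Type) extends AddCommSemigroup S, Semigroup S where
  left_distrib : ∀ a b c : S, a * (b + c) = a * b + a * c
  right_distrib : ∀ a b c : S, (a + b) * c = a * c + b * c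

section Defs
variable {T : Type} [Add T] [Mul T]

def MulAbsorbing (w : T) : Prop := ∀ a : T, a * w = w ∧ w * a = w
def AddAbsorbing (w : T) : Prop := ∀ a : T, a + w = w
def AddNeutral (w : T) : Prop := ∀ a : T, a + w = a
def BiAbsorbing (w : T) : Prop := MulAbsorbing w ∧ AddAbsorbing w
def IsZero (w : T) : Prop := MulAbsorbing w ∧ AddNeutral w
def IsUnity (w : T) : Prop := ∀ a : T, w * a = a ∧ a * w = a

def IsBiIdeal (I : Set T) : Prop :=
  I.Nonempty ∧ ∀ a ∈ I, ∀ s : T, a + s ∈ I ∧ a * s ∈ I ∧ s * a ∈ I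

def IsCongruence (r : T → T → Prop) : Prop :=
  Equivalence r ∧ (∀ a b c d : T, r a b → r c d → r (a + c) (b + d)) ∧
    (∀ a b c d : T, r a b → r c d → r (a * c) (b * d))

/-- The standard quasiordering on a semiring. -/
def leS (a b : T) : Prop := a = b ∨ ∃ c : T, a + c = b

/-- `addPow m b` is the `(m+1)`-fold sum `b + ⋯ + b`. -/
def addPow : ℕ → T → T
  | 0, b => b
  | m + 1, b => addPow m b + b

end Defs

def CongSimple (T : Type) [Add T] [Mul T] : Prop :=
  (∃ a b : T, a ≠ b) ∧
    ∀ r : T → T → Prop, IsCongruence r →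
      (∀ a b : T, r a b ↔ a = b) ∨ (∀ a b : T, r a b)

def BiIdealSimple (T : Type) [Add T] [Mul T] : Prop :=
  (∃ a b : T, a ≠ b) ∧
    ∀ I : Set T, IsBiIdeal I → (∃ w : T, I = {w}) ∨ I = Set.univ

def BiIdealFree (T : Type) [Add T] [Mul T] : Prop :=
  (∃ a b : T, a ≠ b) ∧ ∀ I : Set T, IsBiIdeal I → I = Set.univ

/-- Sum of a nonempty family indexed by `Fin (n+1)`. -/
def finSum {S : Type} [Add S] : ∀ {n : ℕ}, (Fin (n + 1) → S) → S
  | 0, f => f 0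
  | n + 1, f => finSum (fun i : Fin (n + 1) => f i.castSucc) + f (Fin.last (n + 1))

/-- `Mat n S` is the semiring of `(n+1) × (n+1)` matrices over `S`. -/
structure Mat (n : ℕ) (S : Type) where
  entry : Fin (n + 1) → Fin (n + 1) → S

instance {n : ℕ} {S : Type} [Add S] : Add (Mat n S) :=
  ⟨fun A B => ⟨fun i j => A.entry i j + B.entry i j⟩⟩

instance {n : ℕ} {S : Type} [Add S] [Mul S] : Mul (Mat n S) :=
  ⟨fun A B => ⟨fun i j => finSum (fun k => A.entry i k * B.entry k j)⟩⟩

/-- The constant matrix `ā`. -/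
def Mat.const (n : ℕ) {S : Type} (a : S) : Mat n S := ⟨fun _ _ => a⟩

/-! For a bi-ideal `I` of `M_n(S)`, the scalars `s` with `s̄ ∈ I` form a bi-ideal of `S`, hence
all of `S`. It contains the entry of the constant matrix `ā X ā` for any `X ∈ I`. For
multiplication: `S + S` is a bi-ideal of `S`, so every `t` splits as
`t₀ + ⋯ + tₙ`, and `s̄ · Y = (st)‾` for the matrix `Y` whose `k`-th row is constant `tₖ`.
Then `Q_a` is a bi-ideal lying inside every bi-ideal, so it is the least one. -/

instance {S : Type} [PSemiring S] : LeftDistribClass S := ⟨PSemiring.left_distrib⟩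

instance {S : Type} [PSemiring S] : RightDistribClass S := ⟨PSemiring.right_distrib⟩

section FinSum

variable {S : Type}

theorem finSum_succ [Add S] {m : ℕ} (f : Fin (m + 2) → S) :
    finSum f = finSum (fun i : Fin (m + 1) => f i.castSucc) + f (Fin.last (m + 1)) :=
  rfl

theorem finSum_add [AddCommSemigroup S] : ∀ {m : ℕ} (f g : Fin (m + 1) → S),
    finSum (fun i => f i + g i) = finSum f + finSum g
  | 0, _, _ => rfl
  | _ + 1, f, g => by
    rw [finSum_succ, finSum_add, finSum_succ f, finSum_succ g, add_add_add_comm]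

theorem finSum_comm [AddCommSemigroup S] : ∀ {p q : ℕ} (f : Fin (p + 1) → Fin (q + 1) → S),
    finSum (fun i => finSum (f i)) = finSum (fun j => finSum (fun i => f i j))
  | 0, _, _ => rfl
  | _ + 1, _, f => by
    rw [finSum_succ, finSum_comm, ← finSum_add]
    rfl

variable [Add S] [Mul S]

theorem mul_finSum [LeftDistribClass S] : ∀ {m : ℕ} (a : S) (f : Fin (m + 1) → S),
    a * finSum f = finSum (fun i => a * f i)
  | 0, _, _ => rfl
  | _ + 1, a, f => by rw [finSum_succ, mul_add, mul_finSum, finSum_succ]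

theorem finSum_mul [RightDistribClass S] : ∀ {m : ℕ} (a : S) (f : Fin (m + 1) → S),
    finSum f * a = finSum (fun i => f i * a)
  | 0, _, _ => rfl
  | _ + 1, a, f => by rw [finSum_succ, add_mul, finSum_mul, finSum_succ]

end FinSum

attribute [ext] Mat

namespace Mat

variable {n : ℕ} {S : Type}

@[simp]
theorem add_entry [Add S] (A B : Mat n S) (i j : Fin (n + 1)) :
    (A + B).entry i j = A.entry i j + B.entry i j :=
  rfl

@[simp]
theorem mul_entry [Add S] [Mul S] (A B : Mat n S) (i j : Fin (n + 1)) :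
    (A * B).entry i j = finSum (fun k => A.entry i k * B.entry k j) :=
  rfl

instance [PSemiring S] : PSemiring (Mat n S) where
  add_assoc A B C := by ext; exact add_assoc _ _ _
  add_comm A B := by ext; exact add_comm _ _
  mul_assoc A B C := by
    ext i j
    simp only [mul_entry, finSum_mul, mul_finSum, mul_assoc]
    exact finSum_comm _
  left_distrib A B C := by
    ext i j
    simp only [add_entry, mul_entry, mul_add]
    exact finSum_add _ _
  right_distrib A B C := by
    ext i j
    simp only [add_entry, mul_entry, add_mul]
    exact finSum_add _ _

theorem const_add [Add S] (a b : S) : const n (a + b) = const n a + const n b :=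
  rfl

theorem const_mul_rows [Add S] [Mul S] [LeftDistribClass S] (s : S) (y : Fin (n + 1) → S) :
    const n s * ⟨fun k _ => y k⟩ = const n (s * finSum y) := by
  ext i j
  exact (mul_finSum s y).symm

theorem cols_mul_const [Add S] [Mul S] [RightDistribClass S] (s : S) (y : Fin (n + 1) → S) :
    ⟨fun _ k => y k⟩ * const n s = const n (finSum y * s) := by
  ext i j
  exact (finSum_mul s y).symm

theorem const_mul_mul_const [Add S] [Mul S] (a b : S) (X : Mat n S) :
    ∃ c : S, const n a * X * const n b = const n c :=
  ⟨finSum fun m => finSum (fun k => a * X.entry k m) * b, by ext; rfl⟩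

end Mat

section BiIdeal

variable {T : Type} [Add T] [Mul T]

/-- The paper's `Q_x`. -/
def sandwichSet (x : T) : Set T := {X | ∃ A B C : T, A * x * B + C = X}

theorem IsBiIdeal.add_mem {I : Set T} (hI : IsBiIdeal I) {x : T} (hx : x ∈ I) (s : T) :
    x + s ∈ I :=
  (hI.2 x hx s).1

theorem IsBiIdeal.mul_mem_right {I : Set T} (hI : IsBiIdeal I) {x : T} (hx : x ∈ I) (s : T) :
    x * s ∈ I :=
  (hI.2 x hx s).2.1

theorem IsBiIdeal.mul_mem_left {I : Set T} (hI : IsBiIdeal I) {x : T} (hx : x ∈ I) (s : T) :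
    s * x ∈ I :=
  (hI.2 x hx s).2.2

theorem IsBiIdeal.sandwichSet_subset {I : Set T} (hI : IsBiIdeal I) {x : T} (hx : x ∈ I) :
    sandwichSet x ⊆ I := by
  rintro _ ⟨A, B, C, rfl⟩
  exact hI.add_mem (hI.mul_mem_right (hI.mul_mem_left hx A) B) C

theorem eq_sInter_of_isBiIdeal_of_forall_subset {Q : Set T} (hQ : IsBiIdeal Q) {x : T}
    (hx : x ∈ Q) (hle : ∀ I : Set T, IsBiIdeal I → Q ⊆ I) :
    Q = ⋂₀ {I : Set T | IsBiIdeal I ∧ x ∈ I} :=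
  (Set.subset_sInter fun I hI => hle I hI.1).antisymm (Set.sInter_subset_of_mem ⟨hQ, hx⟩)

end BiIdeal

theorem isBiIdeal_sandwichSet {T : Type} [PSemiring T] (x : T) : IsBiIdeal (sandwichSet x) := by
  refine ⟨⟨x * x * x + x, x, x, x, rfl⟩, ?_⟩
  rintro _ ⟨A, B, C, rfl⟩ M
  exact ⟨⟨A, B, C + M, (add_assoc _ _ _).symm⟩,
    ⟨A, B * M, C * M, by rw [add_mul, mul_assoc (A * x)]⟩,
    ⟨M * A, B, M * C, by simp only [mul_add, mul_assoc]⟩⟩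

namespace BiIdealFree

variable {S : Type} [PSemiring S]

theorem mem_of_isBiIdeal (hS : BiIdealFree S) {I : Set S} (hI : IsBiIdeal I) (s : S) : s ∈ I :=
  (hS.2 I hI).symm ▸ Set.mem_univ s

theorem exists_add_eq (hS : BiIdealFree S) (s : S) : ∃ a b : S, a + b = s := by
  obtain ⟨a₀, -, -⟩ := hS.1
  have hsums : IsBiIdeal {x : S | ∃ a b : S, a + b = x} := by
    refine ⟨⟨a₀ + a₀, a₀, a₀, rfl⟩, ?_⟩
    rintro _ ⟨a, b, rfl⟩ t
    exact ⟨⟨a, b + t, (add_assoc a b t).symm⟩, ⟨a * t, b * t, (add_mul a b t).symm⟩,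
      ⟨t * a, t * b, (mul_add t a b).symm⟩⟩
  exact hS.mem_of_isBiIdeal hsums s

theorem exists_finSum_eq (hS : BiIdealFree S) : ∀ (m : ℕ) (s : S),
    ∃ f : Fin (m + 1) → S, finSum f = s
  | 0, s => ⟨fun _ => s, rfl⟩
  | m + 1, s => by
    obtain ⟨t, u, rfl⟩ := hS.exists_add_eq s
    obtain ⟨f, rfl⟩ := exists_finSum_eq hS m t
    exact ⟨Fin.snoc f u, by simp only [finSum_succ, Fin.snoc_castSucc, Fin.snoc_last]⟩

theorem isBiIdeal_const_preimage (hS : BiIdealFree S) {n : ℕ} {I : Set (Mat n S)}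
    (hI : IsBiIdeal I) : IsBiIdeal {s : S | Mat.const n s ∈ I} := by
  obtain ⟨X, hX⟩ := hI.1
  obtain ⟨c, hc⟩ := Mat.const_mul_mul_const (X.entry 0 0) (X.entry 0 0) X
  have hcI : Mat.const n c ∈ I := hc ▸ hI.mul_mem_right (hI.mul_mem_left hX _) _
  refine ⟨⟨c, hcI⟩, fun s (hs : Mat.const n s ∈ I) t => ⟨?_, ?_, ?_⟩⟩
  · rw [Set.mem_ofPred_eq, Mat.const_add]
    exact hI.add_mem hs _
  · obtain ⟨y, rfl⟩ := hS.exists_finSum_eq n t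
    rw [Set.mem_ofPred_eq, ← Mat.const_mul_rows]
    exact hI.mul_mem_right hs _
  · obtain ⟨y, rfl⟩ := hS.exists_finSum_eq n t
    rw [Set.mem_ofPred_eq, ← Mat.cols_mul_const]
    exact hI.mul_mem_left hs _

theorem const_mem_of_isBiIdeal (hS : BiIdealFree S) {n : ℕ} {I : Set (Mat n S)}
    (hI : IsBiIdeal I) (a : S) : Mat.const n a ∈ I :=
  hS.mem_of_isBiIdeal (hS.isBiIdeal_const_preimage hI) a

end BiIdealFree

/-- if `S` is bi-ideal-free, then every bi-ideal of `M_n(S)` contains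
all constant matrices; moreover `Q_a = M_n(S)·ā·M_n(S) + M_n(S)` is the least
bi-ideal of `M_n(S)` and equals the bi-ideal generated by `ā`, for every `a ∈ S`. -/
theorem stmt14 {S : Type} [PSemiring S] (hS : BiIdealFree S) (n : ℕ) :
    (∀ I : Set (Mat n S), IsBiIdeal I → ∀ a : S, Mat.const n a ∈ I) ∧
    ∀ a : S,
      IsBiIdeal {X : Mat n S | ∃ A B C : Mat n S, A * Mat.const n a * B + C = X} ∧
      (∀ I : Set (Mat n S), IsBiIdeal I →
        {X : Mat n S | ∃ A B C : Mat n S, A * Mat.const n a * B + C = X} ⊆ I) ∧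
      {X : Mat n S | ∃ A B C : Mat n S, A * Mat.const n a * B + C = X} =
        ⋂₀ {I : Set (Mat n S) | IsBiIdeal I ∧ Mat.const n a ∈ I} := by
  have hconst : ∀ I : Set (Mat n S), IsBiIdeal I → ∀ a : S, Mat.const n a ∈ I :=
    fun _ hI => hS.const_mem_of_isBiIdeal hI
  refine ⟨hconst, fun a => ?_⟩
  have hQ : IsBiIdeal (sandwichSet (Mat.const n a)) := isBiIdeal_sandwichSet _
  have hleast : ∀ I : Set (Mat n S), IsBiIdeal I → sandwichSet (Mat.const n a) ⊆ I :=
    fun I hI => hI.sandwichSet_subset (hconst I hI a)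
  exact ⟨hQ, hleast, eq_sInter_of_isBiIdeal_of_forall_subset hQ (hconst _ hQ a) hleast⟩
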